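/- Let n≥3 be odd, u ∈ F_{3^n}\F_3 with χ(u+1)≠χ(u-1), s²=1-u², φ=1+s. With g₁(z)=-(u+1)z, g₂(z)=z(z-1-u), g₃(z)=z(z-1+u), g₅(z)=-φ(z+1-s), we have ∑_{z∈F_{3^n}} χ(g₂(z)g₃(z)g₅(z)) + ∑_{z∈F_{3^n}} χ(g₁(z)g₂(z)g₃(z)g₅(z)) = 2. -/

import Mathlib

/-!
Write `φ = 1 + s` and `E(a, b) = ∑ₓ χ(x³ + a x² + b x)`. In characteristic 3 the identities
`(z - 1 - u)(z - 1 + u) = z² + z + s²` and `(1 + s)(z + 1 - s) = (1 + s) z + u²` show that, after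
the square `z²` is removed, the first sum is `∑ χ(-(z² + z + s²)(φ z + u²)) + 1`, and an affine
change of variables turns this cubic into `E(φ², -s φ³)`. The second sum is the quartic
`∑ χ((u + 1) z (z² + z + s²)(φ z + u²))`; the substitution `z = u² φ / w` turns it into
`1 + χ((u + 1) φ) E(φ⁴, -s³ φ⁵)`. Since `-(u + 1) φ = (1 + u + s)²` and `χ(-1) = -1`
(as `3ⁿ ≡ 3 mod 4`), `χ((u + 1) φ) = -1`. Finally `E(φ⁴, -s³ φ⁵) = E(φ⁶, -s³ φ⁹)` by the scaling
`x ↦ φ² x`, and this is `E(φ², -s φ³)` by Frobenius, so the two sums add up to `2`.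
-/

theorem Fintype.sum_sub_eq_sum_sub_of_ne {α M : Type*} [Fintype α] [DecidableEq α]
    [AddCommGroup M] (a : α) {f g : α → M} (h : ∀ x ≠ a, f x = g x) :
    ∑ x, f x - f a = ∑ x, g x - g a := by
  simp only [← Finset.sum_erase_add _ _ (Finset.mem_univ a), add_sub_cancel_right]
  exact Finset.sum_congr rfl fun x hx => h x (Finset.ne_of_mem_erase hx)

theorem Nat.three_pow_mod_four_of_odd {n : ℕ} (hn : Odd n) : 3 ^ n % 4 = 3 := by
  obtain ⟨k, rfl⟩ := hn
  rw [pow_succ, pow_mul, Nat.mul_mod, Nat.pow_mod]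
  norm_num

section QuadraticCharSums

variable {F : Type*} [Field F] [Fintype F] [DecidableEq F]

theorem quadraticChar_neg_one_of_card_mod_four (h : Fintype.card F % 4 = 3) :
    quadraticChar F (-1) = -1 := by
  rw [quadraticChar_neg_one_iff_not_isSquare, FiniteField.isSquare_neg_one_iff, not_not]
  exact h

theorem quadraticChar_sq_mul {a : F} (ha : a ≠ 0) (x : F) :
    quadraticChar F (a ^ 2 * x) = quadraticChar F x := by
  rw [map_mul, quadraticChar_sq_one' ha, one_mul]

theorem quadraticChar_pow_of_odd {k : ℕ} (hk : Odd k) (x : F) :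
    quadraticChar F (x ^ k) = quadraticChar F x := by
  rw [map_pow, ← MulChar.pow_apply' _ (Nat.pos_of_ne_zero (by rintro rfl; simp at hk)).ne',
    (quadraticChar_isQuadratic F).pow_odd hk]

theorem sum_quadraticChar_eq_of_mul_add {a c : F} (ha : a ≠ 0) (b : F) (hc : c ≠ 0)
    {f g : F → F} (h : ∀ x, f (a * x + b) = c ^ 2 * g x) :
    ∑ x, quadraticChar F (f x) = ∑ x, quadraticChar F (g x) := by
  rw [← Fintype.sum_bijective _ ((AddGroup.addRight_bijective b).comp (mulLeft_bijective₀ a ha))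
    _ _ fun _ => rfl]
  exact Finset.sum_congr rfl fun x _ => by
    simp only [Function.comp_apply, h, quadraticChar_sq_mul hc]

theorem sum_quadraticChar_sq_mul (g : F → F) :
    ∑ z, quadraticChar F (z ^ 2 * g z) = ∑ z, quadraticChar F (g z) - quadraticChar F (g 0) := by
  simpa using Fintype.sum_sub_eq_sum_sub_of_ne 0 fun z hz => quadraticChar_sq_mul hz (g z)

theorem sum_quadraticChar_add_eq_of_div {c : F} (hc : c ≠ 0) (f g : F → F)
    (hfg : ∀ w ≠ 0, w ^ 4 * f (c / w) = g w) :
    ∑ w, quadraticChar F (f w) + quadraticChar F (g 0) =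
      ∑ w, quadraticChar F (g w) + quadraticChar F (f 0) := by
  have key := Fintype.sum_sub_eq_sum_sub_of_ne (0 : F)
    (f := fun w => quadraticChar F (f (c / w))) (g := fun w => quadraticChar F (g w))
    fun w hw => by
      rw [← hfg w hw, show w ^ 4 = (w ^ 2) ^ 2 by ring, quadraticChar_sq_mul (pow_ne_zero 2 hw)]
  have hsubst : ∑ w, quadraticChar F (f (c / w)) = ∑ w, quadraticChar F (f w) :=
    Fintype.sum_bijective _ ((mulLeft_bijective₀ c hc).comp inv_involutive.bijective) _ _
      fun w => by simp [div_eq_mul_inv]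
  rw [hsubst, div_zero] at key
  linear_combination key

/-- Minus the trace of Frobenius of the curve `y² = x³ + a x² + b x`. -/
def cubicCharSum (a b : F) : ℤ :=
  ∑ x, quadraticChar F (x ^ 3 + a * x ^ 2 + b * x)

theorem cubicCharSum_scale {t : F} (ht : t ≠ 0) (a b : F) :
    cubicCharSum (t ^ 2 * a) (t ^ 4 * b) = cubicCharSum a b :=
  sum_quadraticChar_eq_of_mul_add (pow_ne_zero 2 ht) 0 (pow_ne_zero 3 ht) fun _ => by ring

theorem cubicCharSum_frobenius (p : ℕ) [Fact p.Prime] [CharP F p] (hp : p ≠ 2) (a b : F) :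
    cubicCharSum (a ^ p) (b ^ p) = cubicCharSum a b := by
  rw [cubicCharSum, ← Fintype.sum_bijective _ (PerfectRing.bijective_frobenius (R := F) (p := p))
    _ _ fun _ => rfl]
  refine Finset.sum_congr rfl fun y _ => ?_
  have hfrob : (y ^ p) ^ 3 + a ^ p * (y ^ p) ^ 2 + b ^ p * y ^ p =
      (y ^ 3 + a * y ^ 2 + b * y) ^ p := by
    simp only [← frobenius_def, map_add, map_mul, map_pow]
  rw [hfrob, quadraticChar_pow_of_odd ((Fact.out : p.Prime).odd_of_ne_two hp)]

end QuadraticCharSums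

section CharThree

variable {F : Type*} [Field F] [Fintype F] [DecidableEq F] [CharP F 3]

theorem cubicCharSum_pow_four_eq {t : F} (ht : t ≠ 0) (s : F) :
    cubicCharSum (t ^ 4) (-s ^ 3 * t ^ 5) = cubicCharSum (t ^ 2) (-s * t ^ 3) :=
  calc cubicCharSum (t ^ 4) (-s ^ 3 * t ^ 5)
      = cubicCharSum (t ^ 2 * t ^ 4) (t ^ 4 * (-s ^ 3 * t ^ 5)) :=
        (cubicCharSum_scale ht _ _).symm
    _ = cubicCharSum ((t ^ 2) ^ 3) ((-s * t ^ 3) ^ 3) := by ring_nf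
    _ = cubicCharSum (t ^ 2) (-s * t ^ 3) := cubicCharSum_frobenius 3 (by norm_num) _ _

variable {u s : F}

theorem quadraticChar_add_one_mul_one_add (hs : s ^ 2 = 1 - u ^ 2)
    (hχ : quadraticChar F (-1) = -1) (hus : 1 + u + s ≠ 0) :
    quadraticChar F ((u + 1) * (1 + s)) = -1 := by
  have hsq : -1 * ((u + 1) * (1 + s)) = (1 + u + s) ^ 2 := by grind
  have := congrArg (quadraticChar F) hsq
  rwa [map_mul, hχ, quadraticChar_sq_one' hus, neg_one_mul, neg_eq_iff_eq_neg] at this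

theorem sum_quadraticChar_cubic_eq_cubicCharSum (hs : s ^ 2 = 1 - u ^ 2) (hφ : 1 + s ≠ 0) :
    ∑ z, quadraticChar F (-((z ^ 2 + z + s ^ 2) * ((1 + s) * z + u ^ 2))) =
      cubicCharSum ((1 + s) ^ 2) (-s * (1 + s) ^ 3) :=
  (sum_quadraticChar_eq_of_mul_add (neg_ne_zero.2 hφ) ((1 + s) * (s - 1)) hφ
    fun _ => by grind).symm

theorem sum_quadraticChar_quartic_eq (hs : s ^ 2 = 1 - u ^ 2) (hu : u ≠ 0) (hs0 : s ≠ 0)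
    (hφ : 1 + s ≠ 0) (hkey : quadraticChar F ((u + 1) * (1 + s)) = -1) :
    ∑ z, quadraticChar F ((u + 1) * z * (z ^ 2 + z + s ^ 2) * ((1 + s) * z + u ^ 2)) =
      1 - cubicCharSum ((1 + s) ^ 4) (-s ^ 3 * (1 + s) ^ 5) := by
  set K : F → F := fun w =>
    (w + (1 + s) ^ 2) * (s ^ 2 * w ^ 2 + u ^ 2 * (1 + s) * w + u ^ 4 * (1 + s) ^ 2) with hK
  have hinv := sum_quadraticChar_add_eq_of_div (mul_ne_zero (pow_ne_zero 2 hu) hφ)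
    (fun z => (u + 1) * z * (z ^ 2 + z + s ^ 2) * ((1 + s) * z + u ^ 2))
    (fun w => (u + 1) * (1 + s) * ((u ^ 2) ^ 2 * K w)) fun w hw => by
      simp only [hK]
      field_simp
      grind
  have hKsum : ∑ w, quadraticChar F (K w) =
      cubicCharSum ((1 + s) ^ 4) (-s ^ 3 * (1 + s) ^ 5) :=
    (sum_quadraticChar_eq_of_mul_add (pow_ne_zero 2 hs0) (s ^ 2 * (1 + s) ^ 2)
      (pow_ne_zero 2 hs0) fun _ => by grind).symm
  have hK0 : K 0 = (u ^ 2 * (1 + s) ^ 2) ^ 2 := by ring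
  have hg (w : F) : quadraticChar F ((u + 1) * (1 + s) * ((u ^ 2) ^ 2 * K w)) =
      -quadraticChar F (K w) := by
    rw [map_mul, hkey, quadraticChar_sq_mul (pow_ne_zero 2 hu), neg_one_mul]
  rw [Finset.sum_congr rfl fun w _ => hg w, hg, Finset.sum_neg_distrib, hKsum, hK0,
    quadraticChar_sq_one' (mul_ne_zero (pow_ne_zero 2 hu) (pow_ne_zero 2 hφ))] at hinv
  simp only [mul_zero, zero_mul, quadraticChar_zero] at hinv
  linear_combination hinv

theorem sum_quadraticChar_g₂g₃g₅ (hs : s ^ 2 = 1 - u ^ 2) (hχ : quadraticChar F (-1) = -1)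
    (hu : u ≠ 0) (hs0 : s ≠ 0) (hφ : 1 + s ≠ 0) :
    ∑ z, quadraticChar F ((z * (z - 1 - u)) * (z * (z - 1 + u)) * (-(1 + s) * (z + 1 - s))) =
      cubicCharSum ((1 + s) ^ 2) (-s * (1 + s) ^ 3) + 1 := by
  have h (z : F) : (z * (z - 1 - u)) * (z * (z - 1 + u)) * (-(1 + s) * (z + 1 - s)) =
      z ^ 2 * -((z ^ 2 + z + s ^ 2) * ((1 + s) * z + u ^ 2)) := by grind
  have h0 : -((0 ^ 2 + 0 + s ^ 2) * ((1 + s) * 0 + u ^ 2)) = -1 * (s * u) ^ 2 := by ring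
  simp only [h]
  rw [sum_quadraticChar_sq_mul, sum_quadraticChar_cubic_eq_cubicCharSum hs hφ, h0, map_mul, hχ,
    quadraticChar_sq_one' (mul_ne_zero hs0 hu)]
  ring

theorem sum_quadraticChar_g₁g₂g₃g₅ (hs : s ^ 2 = 1 - u ^ 2) (hu : u ≠ 0) (hs0 : s ≠ 0)
    (hφ : 1 + s ≠ 0) (hkey : quadraticChar F ((u + 1) * (1 + s)) = -1) :
    ∑ z, quadraticChar F ((-(u + 1) * z) * (z * (z - 1 - u)) * (z * (z - 1 + u)) *
        (-(1 + s) * (z + 1 - s))) =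
      1 - cubicCharSum ((1 + s) ^ 2) (-s * (1 + s) ^ 3) := by
  have h (z : F) : (-(u + 1) * z) * (z * (z - 1 - u)) * (z * (z - 1 + u)) *
      (-(1 + s) * (z + 1 - s)) =
      z ^ 2 * ((u + 1) * z * (z ^ 2 + z + s ^ 2) * ((1 + s) * z + u ^ 2)) := by grind
  simp only [h]
  rw [sum_quadraticChar_sq_mul, sum_quadraticChar_quartic_eq hs hu hs0 hφ hkey,
    cubicCharSum_pow_four_eq hφ]
  simp

end CharThree

theorem stmt_13_general (n : ℕ) (hodd : Odd n)
    (F : Type*) [Field F] [Fintype F] [DecidableEq F]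
    (hcard : Fintype.card F = 3 ^ n)
    (u : F) (hu : u ^ 3 ≠ u)
    (s : F) (hs : s ^ 2 = 1 - u ^ 2) :
    (∑ z : F, quadraticChar F
        ((z * (z - 1 - u)) * (z * (z - 1 + u)) * (-(1 + s) * (z + 1 - s)))) +
      (∑ z : F, quadraticChar F
        ((-(u + 1) * z) * (z * (z - 1 - u)) * (z * (z - 1 + u)) *
          (-(1 + s) * (z + 1 - s)))) = 2 := by
  have : CharP F 3 := charP_of_card_eq_prime_pow hcard
  have hχ : quadraticChar F (-1) = -1 :=
    quadraticChar_neg_one_of_card_mod_four (hcard ▸ Nat.three_pow_mod_four_of_odd hodd)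
  have hu0 : u ≠ 0 := by rintro rfl; simp at hu
  have hu1 : u ^ 2 ≠ 1 := fun h => hu (by rw [pow_succ, h, one_mul])
  have hs0 : s ≠ 0 := by rintro rfl; apply hu1; linear_combination hs
  have hφ : 1 + s ≠ 0 := fun h => hu0 (pow_eq_zero_iff two_ne_zero |>.mp (by grind))
  have hus : 1 + u + s ≠ 0 := fun h => hu1 (by grind)
  rw [sum_quadraticChar_g₂g₃g₅ hs hχ hu0 hs0 hφ,
    sum_quadraticChar_g₁g₂g₃g₅ hs hu0 hs0 hφ (quadraticChar_add_one_mul_one_add hs hχ hus)]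
  ring

theorem stmt_13 (n : ℕ) (hn : 3 ≤ n) (hodd : Odd n)
    (F : Type*) [Field F] [Fintype F] [DecidableEq F]
    (hcard : Fintype.card F = 3 ^ n)
    (u : F) (hu : u ^ 3 ≠ u)
    (huu : quadraticChar F (u + 1) ≠ quadraticChar F (u - 1))
    (s : F) (hs : s ^ 2 = 1 - u ^ 2) :
    (∑ z : F, quadraticChar F
        ((z * (z - 1 - u)) * (z * (z - 1 + u)) * (-(1 + s) * (z + 1 - s)))) +
      (∑ z : F, quadraticChar F
        ((-(u + 1) * z) * (z * (z - 1 - u)) * (z * (z - 1 + u)) *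
          (-(1 + s) * (z + 1 - s)))) = 2 :=
  stmt_13_general n hodd F hcard u hu s hs
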